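/- Let $h: \mathbb{R}^{m \times n} \to \mathbb{R}$ have $L_h$-Lipschitz gradient, $\lambda > 0$, and fix $\mathbf{Z}$. Suppose $\mathbf{B}^+$ minimizes $\mathbf{B} \mapsto h(\mathbf{B}) + \langle \Lambda, \mathbf{B} - \mathbf{Z}\rangle + \frac{\lambda}{2}\|\mathbf{B} - \mathbf{Z}\|^2$ and define $\Lambda^+ = \Lambda + \lambda(\mathbf{B}^+ - \mathbf{Z})$, with $\Lambda = -\nabla h(\mathbf{B})$ for some previous iterate $\mathbf{B}$ satisfying $\Lambda^+ = -\nabla h(\mathbf{B}^+)$. Then the augmented Lagrangian decrease satisfies: $\left[h(\mathbf{B}) + \langle \Lambda, \mathbf{B} - \mathbf{Z}\rangle + \frac{\lambda}{2}\|\mathbf{B} - \mathbf{Z}\|^2\right] - \left[h(\mathbf{B}^+) + \langle \Lambda^+, \mathbf{B}^+ - \mathbf{Z}\rangle + \frac{\lambda}{2}\|\mathbf{B}^+ - \mathbf{Z}\|^2\right] \ge \left(\frac{\lambda - L_h}{2} - \frac{L_h^2}{\lambda}\right)\|\mathbf{B} - \mathbf{B}^+\|^2$. -/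

import Mathlib

/-!
Since `λ (B⁺ - Z) = ∇h(B) - ∇h(B⁺)`, the decrease equals
`[h(B) - h(B⁺) - ⟪∇h(B⁺), B - B⁺⟫] + λ/2 ‖B - B⁺‖² - λ ‖B⁺ - Z‖²`.
The bracket is at least `-L_h/2 ‖B - B⁺‖²` by the descent lemma for a function with
`L_h`-Lipschitz gradient, and the same identity gives `λ ‖B⁺ - Z‖ = ‖∇h(B) - ∇h(B⁺)‖ ≤ L_h ‖B - B⁺‖`,
so the last term is at least `-L_h²/λ ‖B - B⁺‖²`.
-/

open Set RealInnerProductSpace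

lemma add_deriv_sub_le_of_deriv_ge {f f' : ℝ → ℝ} {c : ℝ} (hf : ∀ t, HasDerivAt f (f' t) t)
    (hf' : ∀ t ∈ Ioo (0 : ℝ) 1, f' 0 - c * t ≤ f' t) :
    f 0 + f' 0 - c / 2 ≤ f 1 := by
  have hψ : ∀ t, HasDerivAt (fun t ↦ f t - t * f' 0 + c / 2 * t ^ 2) (f' t - f' 0 + c * t) t := by
    intro t
    refine (((hf t).sub ((hasDerivAt_id' t).mul_const (f' 0))).add
      ((hasDerivAt_pow 2 t).const_mul (c / 2))).congr_deriv ?_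
    push_cast
    ring
  have hmono : MonotoneOn (fun t ↦ f t - t * f' 0 + c / 2 * t ^ 2) (Icc 0 1) := by
    refine monotoneOn_of_hasDerivWithinAt_nonneg (convex_Icc 0 1)
      (fun t _ ↦ (hψ t).continuousAt.continuousWithinAt) (fun t _ ↦ (hψ t).hasDerivWithinAt) ?_
    rw [interior_Icc]
    intro t ht
    linarith [hf' t ht]
  linarith [hmono (left_mem_Icc.2 zero_le_one) (right_mem_Icc.2 zero_le_one) zero_le_one]

lemma mul_sq_le_sq_div_of_mul_le {lam a b : ℝ} (hlam : 0 < lam) (ha : 0 ≤ a) (h : lam * a ≤ b) :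
    lam * a ^ 2 ≤ b ^ 2 / lam := by
  rw [le_div_iff₀ hlam]
  nlinarith [mul_nonneg hlam.le ha]

variable {E : Type*} [NormedAddCommGroup E] [InnerProductSpace ℝ E]

theorem add_inner_sub_le_of_lipschitz_gradient [CompleteSpace E] {f : E → ℝ} {g : E → E} {L : ℝ}
    (hgrad : ∀ x, HasGradientAt f (g x) x) (hlip : ∀ x y, ‖g x - g y‖ ≤ L * ‖x - y‖) (x y : E) :
    f x + ⟪g x, y - x⟫ - L / 2 * ‖y - x‖ ^ 2 ≤ f y := by
  set d := y - x
  have hline : ∀ t : ℝ, HasDerivAt (fun t : ℝ ↦ f (x + t • d)) ⟪g (x + t • d), d⟫ t := by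
    intro t
    have hpath : HasDerivAt (fun t : ℝ ↦ x + t • d) d t := by
      simpa using ((hasDerivAt_id t).smul_const d).const_add x
    exact (hgrad _).hasFDerivAt.comp_hasDerivAt t hpath
  have hslope : ∀ t ∈ Ioo (0 : ℝ) 1,
      ⟪g (x + (0 : ℝ) • d), d⟫ - L * ‖d‖ ^ 2 * t ≤ ⟪g (x + t • d), d⟫ := by
    intro t ht
    have hcs : |⟪g (x + t • d) - g x, d⟫| ≤ L * ‖d‖ ^ 2 * t :=
      calc |⟪g (x + t • d) - g x, d⟫| ≤ ‖g (x + t • d) - g x‖ * ‖d‖ := abs_real_inner_le_norm _ _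
        _ ≤ L * ‖(x + t • d) - x‖ * ‖d‖ := by gcongr; exact hlip _ _
        _ = L * ‖d‖ ^ 2 * t := by
          rw [add_sub_cancel_left, norm_smul, Real.norm_of_nonneg ht.1.le]; ring
    rw [inner_sub_left] at hcs
    simp only [zero_smul, add_zero]
    linarith [(abs_le.1 hcs).1]
  have := add_deriv_sub_le_of_deriv_ge hline hslope
  simp only [zero_smul, add_zero, one_smul, d, add_sub_cancel] at this
  linarith

noncomputable def augLagrangian (f : E → ℝ) (lam : ℝ) (Λ Z B : E) : ℝ :=
  f B + ⟪Λ, B - Z⟫ + lam / 2 * ‖B - Z‖ ^ 2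

lemma augLagrangian_sub_augLagrangian (f : E → ℝ) (lam : ℝ) (gB gBp Z B Bp : E)
    (hstep : lam • (Bp - Z) = gB - gBp) :
    augLagrangian f lam (-gB) Z B - augLagrangian f lam (-gBp) Z Bp =
      (f B - f Bp - ⟪gBp, B - Bp⟫) + lam / 2 * ‖B - Bp‖ ^ 2 - lam * ‖Bp - Z‖ ^ 2 := by
  obtain rfl : gB = gBp + lam • (Bp - Z) := by rw [hstep]; abel
  have hsplit : B - Z = (B - Bp) + (Bp - Z) := by abel
  simp only [augLagrangian, hsplit, ← real_inner_self_eq_norm_sq, inner_add_left, inner_add_right,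
    inner_neg_left, real_inner_smul_left, real_inner_comm (B - Bp) (Bp - Z)]
  ring

theorem stmt_13_general {m n : ℕ}
    (h : EuclideanSpace ℝ (Fin m × Fin n) → ℝ)
    (g : EuclideanSpace ℝ (Fin m × Fin n) → EuclideanSpace ℝ (Fin m × Fin n))
    (Lh lam : ℝ) (hlam : 0 < lam)
    (hgrad : ∀ x, HasGradientAt h (g x) x)
    (hlip : ∀ x y, ‖g x - g y‖ ≤ Lh * ‖x - y‖)
    (Z B Bp Λ Λp : EuclideanSpace ℝ (Fin m × Fin n))
    (hΛ : Λ = -g B)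
    (hfoc : g Bp + Λ + lam • (Bp - Z) = 0)
    (hΛp' : Λp = -g Bp) :
    (h B + (inner ℝ Λ (B - Z) : ℝ) + lam / 2 * ‖B - Z‖ ^ 2) -
        (h Bp + (inner ℝ Λp (Bp - Z) : ℝ) + lam / 2 * ‖Bp - Z‖ ^ 2) ≥
      ((lam - Lh) / 2 - Lh ^ 2 / lam) * ‖B - Bp‖ ^ 2 := by
  subst hΛ hΛp'
  have hstep : lam • (Bp - Z) = g B - g Bp := by
    linear_combination (norm := module) hfoc
  have hprox : lam * ‖Bp - Z‖ ^ 2 ≤ (Lh * ‖B - Bp‖) ^ 2 / lam := by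
    refine mul_sq_le_sq_div_of_mul_le hlam (norm_nonneg _) ?_
    calc lam * ‖Bp - Z‖ = ‖g B - g Bp‖ := by rw [← hstep, norm_smul, Real.norm_of_nonneg hlam.le]
      _ ≤ Lh * ‖B - Bp‖ := hlip B Bp
  rw [mul_pow, mul_div_right_comm] at hprox
  have hdescent := add_inner_sub_le_of_lipschitz_gradient hgrad hlip Bp B
  change augLagrangian h lam (-g B) Z B - augLagrangian h lam (-g Bp) Z Bp ≥ _
  rw [augLagrangian_sub_augLagrangian h lam _ _ Z B Bp hstep]
  linarith

theorem stmt_13 {m n : ℕ}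
    (h : EuclideanSpace ℝ (Fin m × Fin n) → ℝ)
    (g : EuclideanSpace ℝ (Fin m × Fin n) → EuclideanSpace ℝ (Fin m × Fin n))
    (Lh lam : ℝ) (hLh : 0 < Lh) (hlam : 0 < lam)
    (hgrad : ∀ x, HasGradientAt h (g x) x)
    (hlip : ∀ x y, ‖g x - g y‖ ≤ Lh * ‖x - y‖)
    (Z B Bp Λ Λp : EuclideanSpace ℝ (Fin m × Fin n))
    (hΛ : Λ = -g B)
    (hfoc : g Bp + Λ + lam • (Bp - Z) = 0)
    (hΛp : Λp = Λ + lam • (Bp - Z)) (hΛp' : Λp = -g Bp) :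
    (h B + (inner ℝ Λ (B - Z) : ℝ) + lam / 2 * ‖B - Z‖ ^ 2) -
        (h Bp + (inner ℝ Λp (Bp - Z) : ℝ) + lam / 2 * ‖Bp - Z‖ ^ 2) ≥
      ((lam - Lh) / 2 - Lh ^ 2 / lam) * ‖B - Bp‖ ^ 2 :=
  stmt_13_general h g Lh lam hlam hgrad hlip Z B Bp Λ Λp hΛ hfoc hΛp'
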